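/- Consider the nominal distributed linear system z_i(k+1|t) = Σ_{j=1}^M A_{ij} z_j(k|t) + B_i v_i(k|t) over a prediction horizon N ≥ 1, with terminal equality constraint z_i(N|t) = 0 for all i, and time-varying tightened half-space constraints h_{i,j}^{x⊤} z_i(k|t) ≤ 1 − c^x_{i,j,t+k} for all j ∈ {1,…,n_i^x} and h_{i,j}^{u⊤} v_i(k|t) ≤ 1 − c^u_{i,j,t+k} for all j ∈ {1,…,n_i^u}, for k = 0,…,N−1. Assume every tightening value satisfies c^x_{i,j,τ} ≤ 1 and c^u_{i,j,τ} ≤ 1 for all subsystems i, constraint indices j and time indices τ. If the input sequences (v_i(k|t))_{k=0}^{N−1} together with the resulting nominal state sequences (z_i(k|t))_{k=0}^{N} are feasible at time t (i.e., they satisfy the dynamics, the terminal constraint, and all tightened constraints), then the shifted candidate defined by v_i(k|t+1) = v_i(k+1|t) for k = 0,…,N−2 and v_i(N−1|t+1) = 0, with initialization z_i(0|t+1) = z_i(1|t), is feasible for the problem at time t+1: the resulting nominal states satisfy the dynamics, z_i(N|t+1) = 0, and all tightened state and input constraints indexed by t+1. -/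

import Mathlib

/-! Over the horizon the shifted candidate reproduces the old trajectory one step later, so
its constraints at time `t + 1 + k` are the old ones at `t + (k + 1)`. The appended last step
has state `z(N|t) = 0` and input `0`, where the constraints read `0 ≤ 1 - c`, and the dynamics
map `(0, 0)` to `0`, which gives the terminal constraint. -/

def nominalStep {M : ℕ} {n m : Fin M → ℕ}
    (A : ∀ i j : Fin M, Matrix (Fin (n i)) (Fin (n j)) ℝ)
    (B : ∀ i : Fin M, Matrix (Fin (n i)) (Fin (m i)) ℝ)
    (z : ∀ i, Fin (n i) → ℝ) (v : ∀ i, Fin (m i) → ℝ) : ∀ i, Fin (n i) → ℝ :=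
  fun i => (∑ j, (A i j).mulVec (z j)) + (B i).mulVec (v i)

theorem trajectory_shift_eq {α β : Type*} (F : α → β → α) {N : ℕ} {x y : ℕ → α}
    {u w : ℕ → β} (hx : ∀ k < N, x (k + 1) = F (x k) (u k))
    (hy : ∀ k < N, y (k + 1) = F (y k) (w k)) (hinit : y 0 = x 1)
    (hw : ∀ k < N - 1, w k = u (k + 1)) :
    ∀ k < N, y k = x (k + 1) := by
  intro k
  induction k with
  | zero => exact fun _ => hinit
  | succ k ih =>
    intro hk
    rw [hy k (by omega), ih (by omega), hw k (by omega), hx (k + 1) hk]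

theorem halfspace_feasible_of_shift {ι : Type*} [Fintype ι] (h : ι → ℝ) {c : ℕ → ℝ}
    (hc : ∀ τ, c τ ≤ 1) {N t : ℕ} {x x' : ℕ → ι → ℝ}
    (hx : ∀ k < N, h ⬝ᵥ x k ≤ 1 - c (t + k))
    (hshift : ∀ k, k + 1 < N → x' k = x (k + 1)) (hlast : x' (N - 1) = 0) :
    ∀ k < N, h ⬝ᵥ x' k ≤ 1 - c (t + 1 + k) := by
  intro k hk
  rcases Nat.lt_or_ge (k + 1) N with hk1 | hk1
  · rw [hshift k hk1, add_right_comm]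
    exact hx (k + 1) hk1
  · obtain rfl : k = N - 1 := by omega
    rw [hlast, dotProduct_zero]
    linarith [hc (t + 1 + (N - 1))]

/-- Feasibility of the shifted candidate solution for the nominal distributed MPC
problem: if `(z, v)` is feasible at time `t` (dynamics, terminal equality constraint,
and tightened half-space constraints with tightening values bounded by 1), then the
shifted candidate `v'` (shift the inputs, append zero) with indirect-feedback
initialization `z'_i(0|t+1) = z_i(1|t)` is feasible at time `t+1`. -/
theorem shifted_candidate_feasible
    (M N : ℕ) (hN : 1 ≤ N)
    (n m : Fin M → ℕ)
    (A : ∀ i j : Fin M, Matrix (Fin (n i)) (Fin (n j)) ℝ)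
    (B : ∀ i : Fin M, Matrix (Fin (n i)) (Fin (m i)) ℝ)
    (nx nu : Fin M → ℕ)
    (hx : ∀ i : Fin M, Fin (nx i) → (Fin (n i) → ℝ))
    (hu : ∀ i : Fin M, Fin (nu i) → (Fin (m i) → ℝ))
    (cx : ∀ i : Fin M, Fin (nx i) → ℕ → ℝ)
    (cu : ∀ i : Fin M, Fin (nu i) → ℕ → ℝ)
    (hcx : ∀ i (j : Fin (nx i)) (τ : ℕ), cx i j τ ≤ 1)
    (hcu : ∀ i (j : Fin (nu i)) (τ : ℕ), cu i j τ ≤ 1)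
    (t : ℕ)
    -- solution feasible at time t
    (z : ∀ i : Fin M, ℕ → (Fin (n i) → ℝ))
    (v : ∀ i : Fin M, ℕ → (Fin (m i) → ℝ))
    (hdyn : ∀ i, ∀ k < N,
      z i (k + 1) = (∑ j, (A i j).mulVec (z j k)) + (B i).mulVec (v i k))
    (hterm : ∀ i, z i N = 0)
    (hstate : ∀ i, ∀ k < N, ∀ j : Fin (nx i), hx i j ⬝ᵥ z i k ≤ 1 - cx i j (t + k))
    (hinput : ∀ i, ∀ k < N, ∀ j : Fin (nu i), hu i j ⬝ᵥ v i k ≤ 1 - cu i j (t + k))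
    -- shifted candidate at time t+1
    (z' : ∀ i : Fin M, ℕ → (Fin (n i) → ℝ))
    (v' : ∀ i : Fin M, ℕ → (Fin (m i) → ℝ))
    (hv'shift : ∀ i, ∀ k < N - 1, v' i k = v i (k + 1))
    (hv'last : ∀ i, v' i (N - 1) = 0)
    (hz'init : ∀ i, z' i 0 = z i 1)
    (hdyn' : ∀ i, ∀ k < N,
      z' i (k + 1) = (∑ j, (A i j).mulVec (z' j k)) + (B i).mulVec (v' i k)) :
    (∀ i, z' i N = 0) ∧
    (∀ i, ∀ k < N, ∀ j : Fin (nx i), hx i j ⬝ᵥ z' i k ≤ 1 - cx i j (t + 1 + k)) ∧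
    (∀ i, ∀ k < N, ∀ j : Fin (nu i), hu i j ⬝ᵥ v' i k ≤ 1 - cu i j (t + 1 + k)) := by
  have hshift : ∀ k < N, (fun i => z' i k) = fun i => z i (k + 1) :=
    trajectory_shift_eq (nominalStep A B) (x := fun k i => z i k) (y := fun k i => z' i k)
      (fun k hk => funext fun i => hdyn i k hk)
      (fun k hk => funext fun i => hdyn' i k hk) (funext hz'init)
      (fun k hk => funext fun i => hv'shift i k hk)
  have hN1 : N - 1 + 1 = N := Nat.sub_add_cancel hN
  have hz'last : ∀ i, z' i (N - 1) = 0 := fun i => by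
    rw [congrFun (hshift (N - 1) (by omega)) i, hN1, hterm]
  refine ⟨fun i => ?_, fun i k hk j => ?_, fun i k hk j => ?_⟩
  · rw [← hN1, hdyn' i (N - 1) (by omega)]
    simp [hz'last, hv'last]
  · exact halfspace_feasible_of_shift (hx i j) (hcx i j) (hstate i · · j)
      (fun k hk => congrFun (hshift k (by omega)) i) (hz'last i) k hk
  · exact halfspace_feasible_of_shift (hu i j) (hcu i j) (hinput i · · j)
      (fun k hk => hv'shift i k (by omega)) (hv'last i) k hk
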